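/- For every integer k ≥ 0 and every z with 0 < z < 1, one has 2(k+1) Σ_{n=0}^{∞} ((k+2)_n/((3/2)_n)) z^n = ((3/2)_k/k!) · (arcsin(√z)/√z) · (1−z)^{−k−3/2} + Σ_{ℓ=0}^{k} ((k+3/2−ℓ)_ℓ/((k+1−ℓ)_ℓ)) · (1−z)^{−ℓ−1}. -/

import Mathlib

open Finset Real

/-- The Pochhammer symbol `(x)_n = x (x+1) ⋯ (x+n-1)`. -/
noncomputable def poch (x : ℝ) (n : ℕ) : ℝ := (ascPochhammer ℝ n).eval x

/-!
Write `F(b; c; z) = ₂F₁(1, b; c; z)`. Comparing coefficients gives the contiguous relations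
`c ((1 - z) F(b; c) - 1) = (b - c) z F(b; c + 1)` and `b z F(b + 1; c + 1) = c (F(b; c) - 1)`,
which combine to `b (1 - z) F(b + 1; 3/2) = (b - 1/2) F(b; 3/2) + 1/2`. The right-hand side of the
closed form satisfies the same recursion in `k`, so everything reduces to `b = 1`. There, the first
relation with `c = 1/2` says that `f(x) = x F(1; 3/2; x²)`, whose derivative is `F(1; 1/2; x²)`,
solves `(1 - x²) f' - x f = 1`; hence `√(1 - x²) f - arcsin` has zero derivative on `(-1, 1)` and
vanishes at `0`.
-/

@[simp] lemma poch_zero (x : ℝ) : poch x 0 = 1 := by simp [poch]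

lemma poch_succ (x : ℝ) (n : ℕ) : poch x (n + 1) = poch x n * (x + n) :=
  ascPochhammer_succ_eval n x

lemma poch_succ_left (x : ℝ) (n : ℕ) : poch x (n + 1) = x * poch (x + 1) n := by
  simp [poch, ascPochhammer_succ_left, Polynomial.eval_comp]

lemma poch_pos {x : ℝ} (hx : 0 < x) (n : ℕ) : 0 < poch x n := ascPochhammer_pos n x hx

/-- The `n`-th term of `₂F₁(1, b; c; z)`: the factor `(1)_n / n!` equals `1`. -/
noncomputable def hypergeomTerm (b c z : ℝ) (n : ℕ) : ℝ := poch b n / poch c n * z ^ n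

@[simp] lemma hypergeomTerm_zero (b c z : ℝ) : hypergeomTerm b c z 0 = 1 := by
  simp [hypergeomTerm]

lemma summable_norm_hypergeomTerm {b c z : ℝ} (hb : 0 < b) (hc : 0 < c) (hz : |z| < 1) :
    Summable fun n => ‖hypergeomTerm b c z n‖ := by
  have hradius := ordinaryHypergeometricSeries_radius_eq_one (𝔸 := ℝ) 1 b c fun k => by
    have := k.cast_nonneg (α := ℝ)
    exact ⟨by linarith, by linarith, by linarith⟩
  have hz' : z ∈ Metric.eball (0 : ℝ) (ordinaryHypergeometricSeries ℝ 1 b c).radius := by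
    rw [hradius, Metric.mem_eball, edist_zero_right, Real.enorm_eq_ofReal_abs]
    exact ENNReal.ofReal_lt_one.2 hz
  refine ((ordinaryHypergeometricSeries ℝ 1 b c).summable_norm_apply hz').congr fun n => ?_
  rw [ordinaryHypergeometricSeries_apply_eq, ascPochhammer_eval_one, hypergeomTerm, poch, poch,
    smul_eq_mul]
  field_simp

lemma summable_hypergeomTerm {b c z : ℝ} (hb : 0 < b) (hc : 0 < c) (hz : |z| < 1) :
    Summable (hypergeomTerm b c z) :=
  (summable_norm_hypergeomTerm hb hc hz).of_norm

theorem hypergeom_contiguous_c {b c z F G : ℝ} (hc : 0 < c)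
    (hF : HasSum (hypergeomTerm b c z) F) (hG : HasSum (hypergeomTerm b (c + 1) z) G) :
    c * ((1 - z) * F - 1) = (b - c) * z * G := by
  have hshift : HasSum (fun n => hypergeomTerm b c z (n + 1)) (F - 1) := by
    simpa using (hasSum_nat_add_iff' 1).2 hF
  have hterm : ∀ n, c * (hypergeomTerm b c z (n + 1) - z * hypergeomTerm b c z n)
      = (b - c) * z * hypergeomTerm b (c + 1) z n := fun n => by
    have hc1 := (poch_pos (add_pos_of_pos_of_nonneg hc zero_le_one) n).ne'
    have hcn := (poch_pos hc n).ne'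
    have hsucc := (poch_succ c n).symm.trans (poch_succ_left c n)
    simp only [hypergeomTerm, poch_succ b, poch_succ_left c, pow_succ]
    field_simp
    linear_combination (z * z ^ n * poch b n) * hsucc
  have hdiff := (hshift.sub (hF.mul_left z)).mul_left c
  simp only [hterm] at hdiff
  linear_combination hdiff.unique (hG.mul_left _)

theorem hypergeom_index_shift {b c z S U : ℝ} (hc : 0 < c)
    (hS : HasSum (hypergeomTerm b c z) S) (hU : HasSum (hypergeomTerm (b + 1) (c + 1) z) U) :
    b * z * U = c * (S - 1) := by
  have hshift : HasSum (fun n => hypergeomTerm b c z (n + 1)) (S - 1) := by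
    simpa using (hasSum_nat_add_iff' 1).2 hS
  have hterm : ∀ n, c * hypergeomTerm b c z (n + 1)
      = b * z * hypergeomTerm (b + 1) (c + 1) z n := fun n => by
    have := (poch_pos (add_pos_of_pos_of_nonneg hc zero_le_one) n).ne'
    simp only [hypergeomTerm, poch_succ_left, pow_succ]
    field_simp
  have hmul := hshift.mul_left c
  simp only [hterm] at hmul
  exact (hU.mul_left (b * z)).unique hmul

theorem hasSum_hypergeomTerm_add_one {b c z S : ℝ} (hb : 0 < b) (hc : 0 < c) (hz : |z| < 1)
    (hS : HasSum (hypergeomTerm b c z) S) :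
    HasSum (hypergeomTerm (b + 1) c z) (((b + 1 - c) * S + c - 1) / (b * (1 - z))) := by
  have hb1 : 0 < b + 1 := by linarith
  obtain ⟨T, hT⟩ := summable_hypergeomTerm hb1 hc hz
  obtain ⟨U, hU⟩ := summable_hypergeomTerm hb1 (by linarith : 0 < c + 1) hz
  have hcontig := hypergeom_contiguous_c hc hT hU
  have hshift := hypergeom_index_shift hc hS hU
  have hz1 : 1 - z ≠ 0 := by linarith [abs_lt.1 hz]
  convert hT using 1
  rw [div_eq_iff (mul_ne_zero hb.ne' hz1)]
  refine mul_left_cancel₀ hc.ne' ?_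
  linear_combination (-b) * hcontig - (b + 1 - c) * hshift

lemma poch_three_halves (n : ℕ) : poch (3 / 2) n = (2 * n + 1) * poch (1 / 2) n := by
  have h := (poch_succ (1 / 2) n).symm.trans (poch_succ_left (1 / 2) n)
  norm_num at h
  linarith

lemma hasDerivAt_mul_hypergeomTerm_sq (b : ℝ) (n : ℕ) (y : ℝ) :
    HasDerivAt (fun x => x * hypergeomTerm b (3 / 2) (x ^ 2) n)
      (hypergeomTerm b (1 / 2) (y ^ 2) n) y := by
  have hfun : (fun x => x * hypergeomTerm b (3 / 2) (x ^ 2) n)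
      = fun x => poch b n / poch (3 / 2) n * x ^ (2 * n + 1) := by
    funext x
    simp only [hypergeomTerm]
    ring
  rw [hfun]
  refine ((hasDerivAt_pow (2 * n + 1) y).const_mul (poch b n / poch (3 / 2) n)).congr_deriv ?_
  have := (poch_pos one_half_pos n).ne'
  simp only [hypergeomTerm, poch_three_halves, Nat.add_sub_cancel, pow_mul]
  field_simp
  push_cast
  ring

lemma norm_hypergeomTerm_sq_le (b c : ℝ) (n : ℕ) {y r : ℝ} (hyr : |y| ≤ r) :
    ‖hypergeomTerm b c (y ^ 2) n‖ ≤ ‖hypergeomTerm b c (r ^ 2) n‖ := by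
  simp only [hypergeomTerm, norm_mul, norm_pow, Real.norm_eq_abs, sq_abs]
  exact mul_le_mul_of_nonneg_left
    (pow_le_pow_left₀ (sq_nonneg y) (sq_le_sq' (abs_le.1 hyr).1 (abs_le.1 hyr).2) n) (abs_nonneg _)

lemma hasDerivAt_tsum_mul_hypergeomTerm_sq {b y : ℝ} (hb : 0 < b) (hy : |y| < 1) :
    HasDerivAt (fun x => ∑' n, x * hypergeomTerm b (3 / 2) (x ^ 2) n)
      (∑' n, hypergeomTerm b (1 / 2) (y ^ 2) n) y := by
  obtain ⟨r, hyr, hr1⟩ := exists_between hy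
  have hr : |r ^ 2| < 1 := by
    rw [abs_of_nonneg (sq_nonneg r)]
    nlinarith [abs_nonneg y]
  refine hasDerivAt_tsum_of_isPreconnected (summable_norm_hypergeomTerm hb one_half_pos hr)
    isOpen_Ioo (convex_Ioo (-r) r).isPreconnected
    (fun n x _ => hasDerivAt_mul_hypergeomTerm_sq b n x)
    (fun n x hx => norm_hypergeomTerm_sq_le b _ n (abs_le.2 ⟨hx.1.le, hx.2.le⟩))
    (y₀ := 0) ⟨by linarith [abs_nonneg y], by linarith [abs_nonneg y]⟩ (by simp)
    (abs_lt.1 hyr)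

theorem sqrt_one_sub_sq_mul_tsum_eq_arcsin {x : ℝ} (hx : |x| < 1) :
    √(1 - x ^ 2) * ∑' n, x * hypergeomTerm 1 (3 / 2) (x ^ 2) n = arcsin x := by
  set g := fun y => √(1 - y ^ 2) * ∑' n, y * hypergeomTerm 1 (3 / 2) (y ^ 2) n - arcsin y
  have hderiv : ∀ y ∈ Set.Ioo (-1 : ℝ) 1, HasDerivAt g 0 y := by
    intro y hy
    have hw : 0 < 1 - y ^ 2 := by nlinarith [hy.1, hy.2]
    have hy2 : |y ^ 2| < 1 := by rw [abs_of_nonneg (sq_nonneg y)]; linarith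
    obtain ⟨G, hG⟩ := summable_hypergeomTerm one_pos (by norm_num : (0 : ℝ) < 3 / 2) hy2
    obtain ⟨D, hD⟩ := summable_hypergeomTerm one_pos one_half_pos hy2
    -- `(1 - y²) f' - y f = 1` for `f y = y F(1; 3/2; y²)`
    have hode := hypergeom_contiguous_c one_half_pos hD (by norm_num; exact hG)
    have hf : ∑' n, y * hypergeomTerm 1 (3 / 2) (y ^ 2) n = y * G := by
      rw [tsum_mul_left, hG.tsum_eq]
    have hs := sq_sqrt hw.le
    have hs0 := (sqrt_pos.2 hw).ne'
    refine ((((hasDerivAt_pow 2 y).const_sub 1).sqrt hw.ne').mul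
      (hasDerivAt_tsum_mul_hypergeomTerm_sq one_pos (abs_lt.2 hy))).sub
      (hasDerivAt_arcsin hy.1.ne' hy.2.ne) |>.congr_deriv ?_
    rw [hf, hD.tsum_eq]
    field_simp
    linear_combination 4 * hode + 2 * D * hs
  have hconst : g x = g 0 :=
    isOpen_Ioo.is_const_of_deriv_eq_zero isPreconnected_Ioo
      (fun y hy => (hderiv y hy).differentiableAt.differentiableWithinAt)
      (fun y hy => (hderiv y hy).deriv) (abs_lt.1 hx) ⟨by norm_num, by norm_num⟩
  simpa [g, sub_eq_zero] using hconst

theorem hasSum_hypergeomTerm_one_three_halves {z : ℝ} (h0 : 0 < z) (h1 : z < 1) :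
    HasSum (hypergeomTerm 1 (3 / 2) z) (arcsin √z / (√z * √(1 - z))) := by
  have hx : |√z| < 1 := by
    rw [abs_of_nonneg (sqrt_nonneg z), sqrt_lt' one_pos, one_pow]
    exact h1
  obtain ⟨G, hG⟩ :=
    summable_hypergeomTerm one_pos (by norm_num : (0 : ℝ) < 3 / 2) (abs_lt.2 ⟨by linarith, h1⟩)
  have h := sqrt_one_sub_sq_mul_tsum_eq_arcsin hx
  rw [sq_sqrt h0.le, tsum_mul_left, hG.tsum_eq] at h
  have := (sqrt_pos.2 h0).ne'
  have := (sqrt_pos.2 (sub_pos.2 h1)).ne'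
  convert hG using 1
  rw [← h]
  field_simp

noncomputable def hypergeomClosedForm (k : ℕ) (z : ℝ) : ℝ :=
  poch (3 / 2) k / (k.factorial : ℝ) * (Real.arcsin (Real.sqrt z) / Real.sqrt z) *
      (1 - z) ^ (-(k : ℝ) - 3 / 2)
    + ∑ ℓ ∈ Finset.range (k + 1),
        poch ((k : ℝ) + 3 / 2 - ℓ) ℓ / poch ((k : ℝ) + 1 - ℓ) ℓ * (1 - z) ^ (-(ℓ : ℤ) - 1)

lemma poch_sub_natCast_succ (a : ℝ) (ℓ : ℕ) : poch (a - ℓ) (ℓ + 1) = poch (a - ℓ) ℓ * a := by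
  rw [poch_succ, sub_add_cancel]

lemma sum_poch_div_poch_mul_zpow_succ (k : ℕ) {w : ℝ} (hw : w ≠ 0) :
    ∑ ℓ ∈ range (k + 2),
        poch (((k + 1 : ℕ) : ℝ) + 3 / 2 - ℓ) ℓ / poch (((k + 1 : ℕ) : ℝ) + 1 - ℓ) ℓ
          * w ^ (-(ℓ : ℤ) - 1)
      = ((2 * k + 3) / (2 * k + 2) * ∑ ℓ ∈ range (k + 1),
          poch ((k : ℝ) + 3 / 2 - ℓ) ℓ / poch ((k : ℝ) + 1 - ℓ) ℓ * w ^ (-(ℓ : ℤ) - 1) + 1) / w := by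
  rw [sum_range_succ', mul_sum, add_div, sum_div]
  congr 1
  · refine sum_congr rfl fun ℓ _ => ?_
    have e1 : ((k + 1 : ℕ) : ℝ) + 3 / 2 - ((ℓ + 1 : ℕ) : ℝ) = (k + 3 / 2) - ℓ := by push_cast; ring
    have e2 : ((k + 1 : ℕ) : ℝ) + 1 - ((ℓ + 1 : ℕ) : ℝ) = (k + 1) - ℓ := by push_cast; ring
    have e3 : -((ℓ + 1 : ℕ) : ℤ) - 1 = (-(ℓ : ℤ) - 1) - 1 := by push_cast; ring
    rw [e1, e2, e3, poch_sub_natCast_succ, poch_sub_natCast_succ, zpow_sub_one₀ hw]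
    have : (k : ℝ) + 1 ≠ 0 := by positivity
    field_simp
  · simp

lemma hypergeomClosedForm_succ (k : ℕ) {z : ℝ} (hz : z < 1) :
    hypergeomClosedForm (k + 1) z
      = ((2 * k + 3) / (2 * k + 2) * hypergeomClosedForm k z + 1) / (1 - z) := by
  have hw : 1 - z ≠ 0 := (sub_pos.2 hz).ne'
  have hcoeff : poch (3 / 2) (k + 1) / ((k + 1).factorial : ℝ)
      = (2 * k + 3) / (2 * k + 2) * (poch (3 / 2) k / k.factorial) := by
    rw [poch_succ, Nat.factorial_succ]
    push_cast
    field_simp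
    ring
  have hpow : (1 - z) ^ (-((k + 1 : ℕ) : ℝ) - 3 / 2) = (1 - z) ^ (-(k : ℝ) - 3 / 2) / (1 - z) := by
    rw [← rpow_sub_one hw]
    push_cast
    ring_nf
  rw [hypergeomClosedForm, hypergeomClosedForm, hcoeff, hpow, sum_poch_div_poch_mul_zpow_succ k hw]
  field_simp
  ring

theorem hasSum_hypergeomTerm_natCast_add_two (k : ℕ) {z : ℝ} (h0 : 0 < z) (h1 : z < 1) :
    HasSum (hypergeomTerm (k + 2) (3 / 2) z) (hypergeomClosedForm k z / (2 * (k + 1))) := by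
  have hz : |z| < 1 := abs_lt.2 ⟨by linarith, h1⟩
  have hw : 0 < 1 - z := sub_pos.2 h1
  induction k with
  | zero =>
    convert hasSum_hypergeomTerm_add_one one_pos (by norm_num) hz
      (hasSum_hypergeomTerm_one_three_halves h0 h1) using 1
    · norm_num
    · have hpow : (1 - z) ^ (-((0 : ℕ) : ℝ) - 3 / 2) = (√(1 - z) * (1 - z))⁻¹ := by
        rw [show -((0 : ℕ) : ℝ) - 3 / 2 = -(1 / 2) - 1 by norm_num, rpow_sub_one hw.ne',
          rpow_neg hw.le, ← sqrt_eq_rpow, div_eq_mul_inv, mul_inv]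
      have := (sqrt_pos.2 h0).ne'
      have := (sqrt_pos.2 hw).ne'
      simp only [hypergeomClosedForm, hpow]
      norm_num
      field_simp
      ring
  | succ k ih =>
    convert hasSum_hypergeomTerm_add_one (by positivity) (by norm_num) hz ih using 1
    · push_cast
      ring_nf
    · rw [hypergeomClosedForm_succ k h1]
      push_cast
      field_simp
      ring

/-- Closed form for `2(k+1)·₂F₁(1, k+2; 3/2; z)`. -/
theorem stmt6 (k : ℕ) (z : ℝ) (h0 : 0 < z) (h1 : z < 1) :
    HasSum
      (fun n : ℕ => 2 * ((k : ℝ) + 1) * (poch ((k : ℝ) + 2) n / poch (3 / 2) n) * z ^ n)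
      (poch (3 / 2) k / (k.factorial : ℝ) * (Real.arcsin (Real.sqrt z) / Real.sqrt z) *
          (1 - z) ^ (-(k : ℝ) - 3 / 2)
        + ∑ ℓ ∈ Finset.range (k + 1),
            poch ((k : ℝ) + 3 / 2 - ℓ) ℓ / poch ((k : ℝ) + 1 - ℓ) ℓ * (1 - z) ^ (-(ℓ : ℤ) - 1)) := by
  have h := (hasSum_hypergeomTerm_natCast_add_two k h0 h1).mul_left (2 * ((k : ℝ) + 1))
  rw [mul_div_cancel₀ _ (by positivity)] at h
  simpa only [hypergeomTerm, hypergeomClosedForm, mul_assoc] using h
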